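/- arXiv:0912.4834 — 3 statements merged into one kernel-verified Lean document; each statement's English description precedes it below -/
import Mathlib

section
/- Let O ∈ W_d with O ≠ 0 and O not a scalar multiple of ℓ^d for any linear form ℓ, and let F ∈ W_d \ K·O. Let z be the least degree of a nonzero binary form h such that h(∂/∂x, ∂/∂y)(F + cO) = 0 for some c ∈ K. If there exist a squarefree binary form h of degree z and a scalar c ∈ K with h(∂/∂x, ∂/∂y)(F + cO) = 0, then R_X(F) = z. -/
/-!
A linear form `ℓ = a x + b y` acts on binary forms as the derivation `a ∂ₓ + b ∂_y`, whose kernel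
on forms of degree `n` is spanned by `(ℓ^⊥)ⁿ`, where `ℓ^⊥ = b x - a y`: Euler's identity, written
in a frame of derivations containing `a ∂ₓ + b ∂_y`, expresses such a form as `ℓ^⊥` times a form of
degree `n - 1` in the same kernel. Since `ℓ(∂)` maps `(m^⊥)^(n+1)` to a nonzero multiple of
`(m^⊥)^n` whenever `m` is not proportional to `ℓ`, peeling off one factor at a time shows that a
form of degree `d` annihilated by a product `ℓ₁ ⋯ ℓ_z` of pairwise non-proportional linear forms
lies in `span {(ℓᵢ^⊥)^d}`; hence `R_X(F) ≤ z`. Conversely, if `F ∈ span {m₁^d, …, m_r^d} + K·O`,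
then `m₁^⊥ ⋯ m_r^⊥` annihilates a lift `F + cO`, so `r ≥ z` by minimality of `z`.
-/

open MvPolynomial Submodule

noncomputable section

/-- A linear form: a nonzero binary (i.e. two-variable) form of degree `1`. -/
def IsLinForm {K : Type*} [CommSemiring K] (l : MvPolynomial (Fin 2) K) : Prop :=
  l ≠ 0 ∧ l.IsHomogeneous 1

/-- The `X`-rank of `F` with respect to the projection, from the point `[O]`, of the rational
normal curve `{[ℓ^d] : ℓ a linear form}`: the least `r` such that there are linear forms
`ℓ₁, …, ℓ_r` with `F ∈ span {ℓ₁^d, …, ℓ_r^d} + K·O`. -/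
def RX {K : Type*} [Field K] (d : ℕ) (O F : MvPolynomial (Fin 2) K) : ℕ :=
  sInf {r : ℕ | ∃ l : Fin r → MvPolynomial (Fin 2) K, (∀ i, IsLinForm (l i)) ∧
    F ∈ span K (insert O (Set.range fun i => l i ^ d))}

/-- The apolarity action: the differential operator `h(∂/∂x, ∂/∂y)` associated to a binary
form `h`. -/
def diffOp {K : Type*} [CommSemiring K] (h : MvPolynomial (Fin 2) K) :
    Module.End K (MvPolynomial (Fin 2) K) :=
  (AddMonoidAlgebra.coeff h).sum fun m c => c • ((pderiv (0 : Fin 2)).toLinearMap ^ m 0 *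
    (pderiv (1 : Fin 2)).toLinearMap ^ m 1)

/-- `h` is a squarefree form of degree `z`: a product of `z` pairwise non-proportional linear
forms. -/
def IsSqfreeForm {K : Type*} [Field K] (z : ℕ) (h : MvPolynomial (Fin 2) K) : Prop :=
  ∃ l : Fin z → MvPolynomial (Fin 2) K, (∀ i, IsLinForm (l i)) ∧
    (∀ i j, i ≠ j → ∀ c : K, l i ≠ c • l j) ∧ h = ∏ i, l i

namespace MvPolynomial

theorem IsHomogeneous.eq_C_coeff_zero {σ R : Type*} [CommSemiring R] {p : MvPolynomial σ R}
    (hp : p.IsHomogeneous 0) : p = C (coeff 0 p) :=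
  totalDegree_eq_zero_iff_eq_C.mp ((totalDegree_zero_iff_isHomogeneous _).mpr hp)

theorem pderiv_comm {σ R : Type*} [CommSemiring R] (i j : σ) (p : MvPolynomial σ R) :
    pderiv i (pderiv j p) = pderiv j (pderiv i p) := by
  classical
  rcases eq_or_ne i j with rfl | hij
  · rfl
  ext m
  simp only [coeff_pderiv, Finsupp.add_apply, Finsupp.single_eq_of_ne hij,
    Finsupp.single_eq_of_ne hij.symm, add_zero, add_right_comm m]
  ring

end MvPolynomial

section DiffOp

variable {K : Type*} [CommSemiring K]

theorem diffOp_monomial (m : Fin 2 →₀ ℕ) (c : K) :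
    diffOp (monomial m c) =
      c • ((pderiv 0).toLinearMap ^ m 0 * (pderiv 1).toLinearMap ^ m 1) := by
  rw [diffOp, monomial, AddMonoidAlgebra.lsingle_apply, AddMonoidAlgebra.coeff_single]
  exact Finsupp.sum_single_index (by simp)

theorem diffOp_add (p q : MvPolynomial (Fin 2) K) : diffOp (p + q) = diffOp p + diffOp q := by
  rw [diffOp, diffOp, diffOp, AddMonoidAlgebra.coeff_add]
  exact Finsupp.sum_add_index (by simp) fun _ _ _ _ => add_smul _ _ _

theorem diffOp_one : diffOp (1 : MvPolynomial (Fin 2) K) = 1 := by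
  simp [← C_1, ← monomial_zero', diffOp_monomial]

theorem diffOp_mul (p q : MvPolynomial (Fin 2) K) : diffOp (p * q) = diffOp p * diffOp q := by
  have hcomm : Commute (pderiv (0 : Fin 2) : Derivation K _ _).toLinearMap (pderiv 1).toLinearMap :=
    LinearMap.ext fun p => pderiv_comm 0 1 p
  induction p using MvPolynomial.induction_on' with
  | add p₁ p₂ h₁ h₂ => rw [add_mul, diffOp_add, diffOp_add, h₁, h₂, add_mul]
  | monomial m a =>
    induction q using MvPolynomial.induction_on' with
    | add q₁ q₂ h₁ h₂ => rw [mul_add, diffOp_add, diffOp_add, h₁, h₂, mul_add]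
    | monomial n b =>
      rw [monomial_mul, diffOp_monomial, diffOp_monomial, diffOp_monomial, smul_mul_smul_comm,
        Finsupp.add_apply, Finsupp.add_apply, pow_add, pow_add,
        ((hcomm.symm.pow_pow (m 1) (n 0)).mul_mul_mul_comm)]

end DiffOp

section LinearForms

variable {K : Type*}

def linForm [CommSemiring K] (a b : K) : MvPolynomial (Fin 2) K := C a * X 0 + C b * X 1

def dirDeriv [CommSemiring K] (a b : K) :
    Derivation K (MvPolynomial (Fin 2) K) (MvPolynomial (Fin 2) K) :=
  a • pderiv 0 + b • pderiv 1

section CommSemiring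

variable [CommSemiring K]

theorem isHomogeneous_linForm (a b : K) : (linForm a b).IsHomogeneous 1 :=
  (isHomogeneous_C_mul_X a 0).add (isHomogeneous_C_mul_X b 1)

theorem diffOp_linForm (a b : K) (p : MvPolynomial (Fin 2) K) :
    diffOp (linForm a b) p = dirDeriv a b p := by
  simp [linForm, dirDeriv, diffOp_add, C_mul_X_eq_monomial, diffOp_monomial]

theorem dirDeriv_linForm (a b c e : K) : dirDeriv a b (linForm c e) = C (a * c + b * e) := by
  simp [dirDeriv, linForm, pderiv_X, smul_eq_C_mul]

theorem dirDeriv_linForm_pow (a b c e : K) (n : ℕ) :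
    dirDeriv a b (linForm c e ^ n) = (n * (a * c + b * e)) • linForm c e ^ (n - 1) := by
  rw [Derivation.leibniz_pow, dirDeriv_linForm, smul_eq_C_mul, smul_eq_mul,
    nsmul_eq_mul, map_mul, map_natCast]
  ring

theorem dirDeriv_comm (a b c e : K) (p : MvPolynomial (Fin 2) K) :
    dirDeriv a b (dirDeriv c e p) = dirDeriv c e (dirDeriv a b p) := by
  simp only [dirDeriv, Derivation.add_apply, Derivation.smul_apply, map_add, Derivation.map_smul,
    pderiv_comm 1 0 p]
  module

theorem MvPolynomial.IsHomogeneous.dirDeriv {p : MvPolynomial (Fin 2) K} {n : ℕ}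
    (hp : p.IsHomogeneous n) (a b : K) : (dirDeriv a b p).IsHomogeneous (n - 1) :=
  add_mem (smul_mem _ a hp.pderiv) (smul_mem (homogeneousSubmodule _ _ _) b hp.pderiv)

theorem linForm_eq_zero_iff {a b : K} : linForm a b = 0 ↔ a = 0 ∧ b = 0 := by
  refine ⟨fun h => ⟨?_, ?_⟩, fun h => by simp [linForm, h]⟩
  · simpa [dirDeriv_linForm] using congrArg (dirDeriv 1 0) h
  · simpa [dirDeriv_linForm] using congrArg (dirDeriv 0 1) h

theorem MvPolynomial.IsHomogeneous.exists_eq_linForm {l : MvPolynomial (Fin 2) K}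
    (hl : l.IsHomogeneous 1) : ∃ a b, l = linForm a b := by
  rw [← mem_homogeneousSubmodule, homogeneousSubmodule_one_eq_span_X,
    mem_span_range_iff_exists_fun] at hl
  obtain ⟨c, rfl⟩ := hl
  exact ⟨c 0, c 1, by simp [linForm, Fin.sum_univ_two, smul_eq_C_mul]⟩

theorem isLinForm_iff {l : MvPolynomial (Fin 2) K} :
    IsLinForm l ↔ ∃ a b, (a ≠ 0 ∨ b ≠ 0) ∧ l = linForm a b := by
  refine ⟨fun ⟨hl0, hl⟩ => ?_, ?_⟩
  · obtain ⟨a, b, rfl⟩ := hl.exists_eq_linForm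
    exact ⟨a, b, by simpa [linForm_eq_zero_iff, or_iff_not_and_not] using hl0, rfl⟩
  · rintro ⟨a, b, hab, rfl⟩
    exact ⟨by simpa [linForm_eq_zero_iff, or_iff_not_and_not] using hab, isHomogeneous_linForm a b⟩

theorem smul_linForm (t a b : K) : t • linForm a b = linForm (t * a) (t * b) := by
  simp only [linForm, smul_add, smul_eq_C_mul, map_mul, mul_assoc]

end CommSemiring

theorem mul_sub_mul_ne_zero_of_forall_linForm_ne_smul [Field K] {a b c e : K}
    (hce : c ≠ 0 ∨ e ≠ 0) (h : ∀ t : K, linForm a b ≠ t • linForm c e) : a * e - b * c ≠ 0 := by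
  intro hδ
  rcases hce with hc | he
  · exact h (a / c) (by rw [smul_linForm]; congr 1 <;> field_simp; linear_combination -hδ)
  · exact h (b / e) (by rw [smul_linForm]; congr 1 <;> field_simp; linear_combination hδ)

theorem exists_annihilator_of_mem_span [CommRing K] [IsDomain K] {d r : ℕ}
    {O F : MvPolynomial (Fin 2) K} {l : Fin r → MvPolynomial (Fin 2) K} (hl : ∀ i, IsLinForm (l i))
    (hF : F ∈ span K (insert O (Set.range fun i => l i ^ d))) :
    ∃ (h : MvPolynomial (Fin 2) K) (c : K),
      h ≠ 0 ∧ h.IsHomogeneous r ∧ diffOp h (F + c • O) = 0 := by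
  choose a b hab hlab using fun i => isLinForm_iff.mp (hl i)
  obtain rfl : l = fun i => linForm (a i) (b i) := funext hlab
  obtain ⟨c, w, hw, rfl⟩ := mem_span_insert.mp hF
  refine ⟨∏ i, linForm (b i) (-a i), -c, ?_, ?_, ?_⟩
  · refine Finset.prod_ne_zero_iff.mpr fun i _ => ?_
    rw [Ne, linForm_eq_zero_iff, neg_eq_zero]
    exact fun h => (hab i).elim (· h.2) (· h.1)
  · simpa using IsHomogeneous.prod Finset.univ (fun i => linForm (b i) (-a i)) (fun _ => 1)
      fun i _ => isHomogeneous_linForm _ _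
  · suffices span K (Set.range fun i => linForm (a i) (b i) ^ d) ≤
        LinearMap.ker (diffOp (∏ i, linForm (b i) (-a i))) by
      simpa [neg_smul, add_comm] using this hw
    rw [span_le]
    rintro _ ⟨i, rfl⟩
    rw [SetLike.mem_coe, LinearMap.mem_ker, ← Finset.prod_erase_mul _ _ (Finset.mem_univ i),
      diffOp_mul, Module.End.mul_apply, diffOp_linForm, dirDeriv_linForm_pow]
    simp [mul_comm]

section CharZero

variable [Field K] [CharZero K]

theorem mem_span_pow_of_dirDeriv_eq_zero {a b : K} (hab : a ≠ 0 ∨ b ≠ 0) {n : ℕ}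
    {p : MvPolynomial (Fin 2) K} (hp : p.IsHomogeneous n) (hDp : dirDeriv a b p = 0) :
    p ∈ K ∙ linForm b (-a) ^ n := by
  obtain ⟨c, e, hδ⟩ : ∃ c e : K, a * e - b * c ≠ 0 := by
    rcases hab with ha | hb
    · exact ⟨0, 1, by simpa using ha⟩
    · exact ⟨-1, 0, by simpa using hb⟩
  have euler {m : ℕ} {q : MvPolynomial (Fin 2) K} (hq : q.IsHomogeneous m) :
      ((m : K) * (a * e - b * c)) • q =
        linForm e (-c) * dirDeriv a b q - linForm b (-a) * dirDeriv c e q := by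
    rw [mul_comm, mul_smul, Nat.cast_smul_eq_nsmul, ← hq.sum_X_mul_pderiv, Fin.sum_univ_two]
    simp only [linForm, dirDeriv, Derivation.add_apply, Derivation.smul_apply, smul_eq_C_mul,
      map_sub, map_mul, map_neg]
    ring
  induction n generalizing p with
  | zero => exact mem_span_singleton.mpr ⟨coeff 0 p, by simp [smul_eq_C_mul, ← hp.eq_C_coeff_zero]⟩
  | succ n ih =>
    obtain ⟨t, ht⟩ := mem_span_singleton.mp
      (ih (hp.dirDeriv c e) (by rw [dirDeriv_comm, hDp, map_zero]))
    have hk : ((n + 1 : ℕ) : K) * (a * e - b * c) ≠ 0 :=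
      mul_ne_zero (Nat.cast_ne_zero.mpr n.succ_ne_zero) hδ
    refine mem_span_singleton.mpr ⟨-t / (((n + 1 : ℕ) : K) * (a * e - b * c)), ?_⟩
    rw [← inv_smul_smul₀ hk p, euler hp, hDp, ← ht, div_eq_inv_mul, mul_smul]
    simp [pow_succ']

theorem span_pow_le_map_dirDeriv {ι : Type*} {a b : K} {c e : ι → K}
    (h : ∀ i, a * c i + b * e i ≠ 0) (n : ℕ) :
    span K (Set.range fun i => linForm (c i) (e i) ^ n) ≤
      (span K (Set.range fun i => linForm (c i) (e i) ^ (n + 1))).map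
        (dirDeriv a b).toLinearMap := by
  rw [map_span, span_le]
  rintro _ ⟨i, rfl⟩
  have hk : ((n + 1 : ℕ) : K) * (a * c i + b * e i) ≠ 0 :=
    mul_ne_zero (Nat.cast_ne_zero.mpr n.succ_ne_zero) (h i)
  have hD : dirDeriv a b (linForm (c i) (e i) ^ (n + 1)) =
      (((n + 1 : ℕ) : K) * (a * c i + b * e i)) • linForm (c i) (e i) ^ n := by
    rw [dirDeriv_linForm_pow, Nat.add_sub_cancel]
  dsimp only
  rw [SetLike.mem_coe, ← inv_smul_smul₀ hk (linForm (c i) (e i) ^ n), ← hD]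
  exact smul_mem _ _ (subset_span ⟨_, ⟨i, rfl⟩, rfl⟩)

theorem mem_span_pow_of_diffOp_prod_eq_zero {z d : ℕ} {a b : Fin z → K}
    (hab : ∀ i, a i ≠ 0 ∨ b i ≠ 0) (hdet : ∀ i j, i ≠ j → a i * b j - b i * a j ≠ 0)
    {G : MvPolynomial (Fin 2) K} (hG : G.IsHomogeneous d)
    (hG0 : diffOp (∏ i, linForm (a i) (b i)) G = 0) :
    G ∈ span K (Set.range fun i => linForm (b i) (-a i) ^ d) := by
  induction z generalizing d G with
  | zero => simp_all [diffOp_one]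
  | succ z ih =>
    obtain _ | d := d
    · rw [hG.eq_C_coeff_zero, ← mul_one (C _), ← smul_eq_C_mul]
      exact smul_mem _ _ (subset_span ⟨Fin.last z, pow_zero _⟩)
    rw [Fin.prod_univ_castSucc, diffOp_mul, Module.End.mul_apply, diffOp_linForm] at hG0
    have hDG := ih (a := fun i => a i.castSucc) (b := fun i => b i.castSucc) (fun i => hab _)
      (fun i j hij => hdet _ _ (Fin.castSucc_injective _ |>.ne hij)) (hG.dirDeriv _ _) hG0
    obtain ⟨H, hH, hDH⟩ := span_pow_le_map_dirDeriv
      (fun i => by simpa [sub_eq_add_neg] using hdet _ _ (Fin.castSucc_lt_last i).ne') d hDG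
    have hHd : H.IsHomogeneous (d + 1) := by
      refine (span_le (p := homogeneousSubmodule (Fin 2) K (d + 1))).mpr ?_ hH
      rintro _ ⟨i, rfl⟩
      simpa using (isHomogeneous_linForm _ _).pow (d + 1)
    have hGH : G - H ∈ K ∙ linForm (b (Fin.last z)) (-a (Fin.last z)) ^ (d + 1) :=
      mem_span_pow_of_dirDeriv_eq_zero (hab _) (hG.sub hHd)
        (by rw [map_sub, ← hDH]; exact sub_self _)
    rw [← sub_add_cancel G H]
    exact add_mem
      (span_mono (Set.singleton_subset_iff.mpr (Set.mem_range_self (Fin.last z))) hGH)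
      (span_mono (Set.range_comp_subset_range Fin.castSucc _) hH)

end CharZero

end LinearForms

theorem rankX_eq_of_squarefree_apolar_general
    {K : Type*} [Field K] [CharZero K] (d : ℕ)
    (O : MvPolynomial (Fin 2) K) (hOd : O.IsHomogeneous d)
    (F : MvPolynomial (Fin 2) K) (hFd : F.IsHomogeneous d)
    (z : ℕ)
    (hz : IsLeast {n : ℕ | ∃ (h : MvPolynomial (Fin 2) K) (c : K),
      h ≠ 0 ∧ h.IsHomogeneous n ∧ diffOp h (F + c • O) = 0} z)
    (hsq : ∃ (h : MvPolynomial (Fin 2) K) (c : K),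
      h.IsHomogeneous z ∧ IsSqfreeForm z h ∧ diffOp h (F + c • O) = 0) :
    RX d O F = z := by
  obtain ⟨_, c, -, ⟨l, hl, hnp, rfl⟩, hann⟩ := hsq
  choose a b hab hlab using fun i => isLinForm_iff.mp (hl i)
  obtain rfl : l = fun i => linForm (a i) (b i) := funext hlab
  have hdet i j (hij : i ≠ j) : a i * b j - b i * a j ≠ 0 :=
    mul_sub_mul_ne_zero_of_forall_linForm_ne_smul (hab j) (hnp i j hij)
  have hlift := mem_span_pow_of_diffOp_prod_eq_zero hab hdet
    (hFd.add ((homogeneousSubmodule _ _ d).smul_mem c hOd)) hann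
  have hF : F ∈ span K (insert O (Set.range fun i => linForm (b i) (-a i) ^ d)) := by
    simpa using add_mem (span_mono (Set.subset_insert _ _) hlift)
      (smul_mem _ (-c) (subset_span (Set.mem_insert O _)))
  have hperp i : IsLinForm (linForm (b i) (-a i)) :=
    isLinForm_iff.mpr ⟨_, _, by simpa [or_comm] using hab i, rfl⟩
  refine le_antisymm (Nat.sInf_le ⟨_, hperp, hF⟩) (le_csInf ⟨z, _, hperp, hF⟩ ?_)
  rintro r ⟨m, hm, hFm⟩
  exact hz.2 (exists_annihilator_of_mem_span hm hFm)

/-- reduced case of Proposition 2.10 of the paper: if `z` is the least degree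
of a nonzero form annihilating some lift `F + cO`, and some *squarefree* form `h` of degree `z`
annihilates a lift `F + cO`, then `R_X(F) = z`. -/
theorem rankX_eq_of_squarefree_apolar
    {K : Type*} [Field K] [IsAlgClosed K] [CharZero K] (d : ℕ) (hd : 2 ≤ d)
    (O : MvPolynomial (Fin 2) K) (hOd : O.IsHomogeneous d) (hO0 : O ≠ 0)
    (hOC : ∀ (c : K) (l : MvPolynomial (Fin 2) K), IsLinForm l → O ≠ c • l ^ d)
    (F : MvPolynomial (Fin 2) K) (hFd : F.IsHomogeneous d)
    (hFO : F ∉ span K ({O} : Set (MvPolynomial (Fin 2) K)))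
    (z : ℕ)
    (hz : IsLeast {n : ℕ | ∃ (h : MvPolynomial (Fin 2) K) (c : K),
      h ≠ 0 ∧ h.IsHomogeneous n ∧ diffOp h (F + c • O) = 0} z)
    (hsq : ∃ (h : MvPolynomial (Fin 2) K) (c : K),
      h.IsHomogeneous z ∧ IsSqfreeForm z h ∧ diffOp h (F + c • O) = 0) :
    RX d O F = z :=
  rankX_eq_of_squarefree_apolar_general d O hOd F hFd z hz hsq
end
end

section
/- Let K be an algebraically closed field of characteristic 0, let d ≥ 2, and let W_d be the K-vector space of binary forms of degree d in x, y. Fix O ∈ W_d, O ≠ 0, not a scalar multiple of ℓ^d for any linear form ℓ. Let V ⊆ W_d be a K-linear subspace with O ∈ V and such that ℓ^d ∉ V for every linear form ℓ (i.e. the image of ℙ(V/K·O) in ℙ(W_d/K·O) is disjoint from the projected curve X). Then there exist linear forms ℓ₁, …, ℓ_{d−1} such that V ⊆ span_K{ℓ₁^d, …, ℓ_{d−1}^d} + K·O. -/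
open MvPolynomial Submodule

noncomputable section

/-!
A linear functional `φ` on binary forms, restricted along `r ↦ (x + r y)^d`, becomes a polynomial
of degree `≤ d` whose `r^d`-coefficient is `φ (y^d)`. The annihilator of `V` thus gives a linear
system on `ℙ¹` without base points (as `V` contains no `d`-th power), and the general member of
a base-point-free pencil in it is squarefree (its double roots are roots of the Wronskian). This
gives `φ ∈ V^⊥` with `φ (y^d) ≠ 0` whose hyperplane meets the curve in `d` distinct points
`ℓᵢ^d`. They span `ker φ ∩ W_d ⊇ V`: a functional killing them restricts to a polynomial of degree
`≤ d` with the same `d` roots, hence to a multiple of that of `φ`. Finally one `ℓₖ^d` occurring in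
`O` can be exchanged for `O`.
-/

theorem Submodule.exists_mem_dualAnnihilator_apply_ne_zero {K M : Type*} [Field K]
    [AddCommGroup M] [Module K M] {V : Submodule K M} {v : M} (hv : v ∉ V) :
    ∃ φ ∈ V.dualAnnihilator, φ v ≠ 0 := by
  by_contra! h
  exact hv ((Subspace.forall_mem_dualAnnihilator_apply_eq_zero_iff V v).1 h)

theorem Submodule.exists_mem_forall_apply_ne_zero {K M ι : Type*} [Field K] [Infinite K]
    [AddCommGroup M] [Module K M] [Finite ι] (S : Submodule K M) (f : ι → Module.Dual K M)
    (hf : ∀ i, ∃ x ∈ S, f i x ≠ 0) : ∃ x ∈ S, ∀ i, f i x ≠ 0 := by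
  by_contra! h
  obtain ⟨i, hi⟩ := Subspace.exists_eq_top_of_iUnion_eq_univ
    (p := fun i => LinearMap.ker ((f i).domRestrict S)) <| Set.eq_univ_of_forall fun x => by
      obtain ⟨i, hi⟩ := h x x.2
      exact Set.mem_iUnion.2 ⟨i, hi⟩
  obtain ⟨x, hx, hfx⟩ := hf i
  exact hfx (LinearMap.mem_ker.1 (hi ▸ mem_top : (⟨x, hx⟩ : S) ∈ _))

theorem Submodule.exists_span_range_le_span_insert_succAbove {K M : Type*} [Field K]
    [AddCommGroup M] [Module K M] {n : ℕ} {v : Fin (n + 1) → M} {x : M}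
    (hx : x ∈ span K (Set.range v)) (hx0 : x ≠ 0) :
    ∃ k : Fin (n + 1), span K (Set.range v) ≤ span K (insert x (Set.range (v ∘ k.succAbove))) := by
  obtain ⟨c, rfl⟩ := (mem_span_range_iff_exists_fun K).1 hx
  obtain ⟨k, hk⟩ : ∃ k, c k ≠ 0 := by
    by_contra! h
    simp [h] at hx0
  refine ⟨k, span_le.2 ?_⟩
  set T := span K (insert (∑ i, c i • v i) (Set.range (v ∘ k.succAbove)))
  have hv (i : Fin n) : v (k.succAbove i) ∈ T := subset_span (Or.inr ⟨i, rfl⟩)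
  have hvk : v k ∈ T := by
    have : v k = (c k)⁻¹ • (∑ i, c i • v i - ∑ i, c (k.succAbove i) • v (k.succAbove i)) := by
      rw [Fin.sum_univ_succAbove _ k, add_sub_cancel_right, smul_smul, inv_mul_cancel₀ hk,
        one_smul]
    rw [this]
    exact T.smul_mem _ (T.sub_mem (subset_span (Or.inl rfl))
      (T.sum_mem fun i _ => T.smul_mem _ (hv i)))
  rintro _ ⟨j, rfl⟩
  obtain rfl | ⟨i, rfl⟩ := Fin.eq_self_or_eq_succAbove k j
  exacts [hvk, hv i]

namespace Polynomial

theorem exists_isRoot_derivative_of_not_nodup_roots {R : Type*} [CommRing R] [IsDomain R]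
    {p : R[X]} (hp : ¬ p.roots.Nodup) :
    ∃ z, p.IsRoot z ∧ (derivative p).IsRoot z := by
  classical
  obtain ⟨z, hz⟩ : ∃ z, 1 < p.roots.count z := by
    simpa [Multiset.nodup_iff_count_le_one] using hp
  have hp0 : p ≠ 0 := by rintro rfl; simp at hz
  rw [count_roots] at hz
  exact ⟨z, (one_lt_rootMultiplicity_iff_isRoot hp0).1 hz⟩

variable {K : Type*} [Field K]

theorem finite_setOf_not_nodup_roots_add_C_mul [CharZero K] {f g : K[X]} (hfg : IsCoprime f g) :
    {t : K | ¬ (f + C t * g).roots.Nodup}.Finite := by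
  by_cases hw : wronskian f g = 0
  · obtain ⟨hf, hg⟩ := hfg.wronskian_eq_zero_iff.1 hw
    refine Set.finite_empty.subset fun t ht => ht ?_
    rw [eq_C_of_derivative_eq_zero hf, eq_C_of_derivative_eq_zero hg, ← Polynomial.C_mul,
      ← Polynomial.C_add, roots_C]
    exact Multiset.nodup_zero
  refine ((finite_setOfPred_isRoot hw).image fun z => -f.eval z / g.eval z).subset ?_
  intro t ht
  obtain ⟨z, hz, hz'⟩ := exists_isRoot_derivative_of_not_nodup_roots ht
  simp only [IsRoot, eval_add, eval_mul, eval_C, derivative_add, derivative_mul, derivative_C,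
    zero_mul, zero_add] at hz hz'
  obtain ⟨a, b, hab⟩ := hfg
  have hgz : g.eval z ≠ 0 := fun hgz => by
    simpa [hgz, show f.eval z = 0 by simpa [hgz] using hz] using congrArg (eval z) hab
  refine ⟨z, ?_, ?_⟩
  · simp only [Set.mem_ofPred_eq, IsRoot, wronskian, eval_sub, eval_mul]
    linear_combination (derivative g).eval z * hz - g.eval z * hz'
  · field_simp
    linear_combination -hz

theorem exists_mem_coeff_ne_zero_nodup_roots [IsAlgClosed K] [CharZero K] {S : Submodule K K[X]}
    {n : ℕ} (hn : ∃ q ∈ S, q.coeff n ≠ 0) (hS : ∀ z, ∃ q ∈ S, q.eval z ≠ 0) :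
    ∃ p ∈ S, p.coeff n ≠ 0 ∧ p.roots.Nodup := by
  classical
  obtain ⟨f, hfS, hfn⟩ := hn
  obtain ⟨g, hgS, hg⟩ := S.exists_mem_forall_apply_ne_zero
    (fun z : f.roots.toFinset => leval (z : K)) fun z => hS z
  have hfg : IsCoprime f g := by
    refine (isCoprime_iff_aeval_ne_zero_of_isAlgClosed K K f g).2 fun z => ?_
    by_cases hz : f.eval z = 0
    · have hz : z ∈ f.roots.toFinset := by
        simpa [mem_roots', hz] using fun hf : f = 0 => hfn (by simp [hf])
      exact Or.inr (by simpa using hg ⟨z, hz⟩)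
    · exact Or.inl (by simpa using hz)
  have hlead : {t : K | (f + C t * g).coeff n = 0} ⊆ {-f.coeff n / g.coeff n} := by
    intro t ht
    simp only [Set.mem_ofPred_eq, coeff_add, coeff_C_mul] at ht
    have hgn : g.coeff n ≠ 0 := fun hgn => hfn (by simpa [hgn] using ht)
    rw [Set.mem_singleton_iff, eq_div_iff hgn]
    linear_combination ht
  obtain ⟨t, ht⟩ := ((finite_setOf_not_nodup_roots_add_C_mul hfg).union
    ((Set.finite_singleton _).subset hlead)).exists_notMem
  rw [Set.mem_union, not_or, Set.mem_ofPred_eq, not_not] at ht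
  exact ⟨f + C t * g, S.add_mem hfS (by simpa [smul_eq_C_mul] using S.smul_mem t hgS),
    ht.2, ht.1⟩

theorem exists_injective_isRoot [IsAlgClosed K] {p : K[X]} {n : ℕ} (hpn : p.natDegree = n)
    (hp : p.roots.Nodup) : ∃ r : Fin n → K, Function.Injective r ∧ ∀ i, p.IsRoot (r i) := by
  classical
  have hcard : p.roots.toFinset.card = n := by
    rw [Multiset.toFinset_card_of_nodup hp, IsAlgClosed.card_roots_eq_natDegree, hpn]
  let e := Finset.equivFinOfCardEq hcard
  refine ⟨fun i => e.symm i, Subtype.val_injective.comp e.symm.injective, fun i => ?_⟩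
  exact (mem_roots'.1 (Multiset.mem_toFinset.1 (e.symm i).2)).2

end Polynomial

section
variable {K : Type*} [Field K]

theorem homogeneousSubmodule_fin_two_eq_span (d : ℕ) :
    homogeneousSubmodule (Fin 2) K d =
      span K (Set.range fun k : Fin (d + 1) => (X 0 ^ (d - k) * X 1 ^ (k : ℕ) :
        MvPolynomial (Fin 2) K)) := by
  apply le_antisymm
  · rw [homogeneousSubmodule_eq_finsupp_supported, AddMonoidAlgebra.supported_eq_span_single,
      span_le]
    rintro _ ⟨s, hs, rfl⟩
    have hs : s 0 + s 1 = d := by simpa [Finsupp.degree_eq_sum, Fin.sum_univ_two] using hs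
    refine subset_span ⟨⟨s 1, by omega⟩, ?_⟩
    show _ = AddMonoidAlgebra.single s 1
    rw [single_eq_monomial, monomial_eq, Finsupp.prod_fintype _ _ (by simp), Fin.prod_univ_two]
    simp [show d - s 1 = s 0 by omega]
  · rw [span_le]
    rintro _ ⟨k, rfl⟩
    have := (isHomogeneous_X_pow (R := K) (0 : Fin 2) (d - k)).mul (isHomogeneous_X_pow 1 k)
    rwa [Nat.sub_add_cancel (Nat.lt_succ_iff.1 k.2)] at this

variable (K) in
def restrictToCurve (d : ℕ) : Module.Dual K (MvPolynomial (Fin 2) K) →ₗ[K] Polynomial K :=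
  ∑ k ∈ Finset.range (d + 1), (d.choose k : K) •
    (Polynomial.monomial k ∘ₗ Module.Dual.eval K _ (X 0 ^ (d - k) * X 1 ^ k))

variable {d : ℕ} (φ : Module.Dual K (MvPolynomial (Fin 2) K))

theorem restrictToCurve_apply : restrictToCurve K d φ =
    ∑ k ∈ Finset.range (d + 1),
      Polynomial.monomial k ((d.choose k : K) * φ (X 0 ^ (d - k) * X 1 ^ k)) := by
  simp [restrictToCurve, LinearMap.sum_apply, Polynomial.smul_monomial]

theorem coeff_restrictToCurve (k : ℕ) : (restrictToCurve K d φ).coeff k =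
    if k ≤ d then (d.choose k : K) * φ (X 0 ^ (d - k) * X 1 ^ k) else 0 := by
  simp [restrictToCurve_apply, Polynomial.finsetSum_coeff, Polynomial.coeff_monomial]

theorem natDegree_restrictToCurve_le : (restrictToCurve K d φ).natDegree ≤ d :=
  Polynomial.natDegree_le_iff_coeff_eq_zero.2 fun k hk => by
    simp [coeff_restrictToCurve, not_le.2 (Nat.cast_lt.1 hk)]

theorem coeff_restrictToCurve_self : (restrictToCurve K d φ).coeff d = φ (X 1 ^ d) := by
  simp [coeff_restrictToCurve]

theorem eval_restrictToCurve (r : K) :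
    (restrictToCurve K d φ).eval r = φ ((X 0 + C r * X 1) ^ d) := by
  rw [restrictToCurve_apply, Polynomial.eval_finsetSum, add_comm (X 0), add_pow, map_sum]
  refine Finset.sum_congr rfl fun k _ => ?_
  have : (C r * X 1) ^ k * X 0 ^ (d - k) * (d.choose k : MvPolynomial (Fin 2) K) =
      ((d.choose k : K) * r ^ k) • (X 0 ^ (d - k) * X 1 ^ k) := by
    rw [smul_eq_C_mul, mul_pow, ← C_pow, map_mul, map_natCast]; ring
  rw [this, map_smul, Polynomial.eval_monomial, smul_eq_mul]; ring

theorem homogeneousSubmodule_le_ker_of_restrictToCurve_eq_zero [CharZero K]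
    (hφ : restrictToCurve K d φ = 0) : homogeneousSubmodule (Fin 2) K d ≤ LinearMap.ker φ := by
  rw [homogeneousSubmodule_fin_two_eq_span, span_le]
  rintro _ ⟨k, rfl⟩
  have hk : (k : ℕ) ≤ d := Nat.lt_succ_iff.1 k.2
  have := coeff_restrictToCurve (d := d) φ k
  rw [hφ, Polynomial.coeff_zero, if_pos hk, eq_comm, mul_eq_zero] at this
  exact this.resolve_left (Nat.cast_ne_zero.2 (Nat.choose_pos hk).ne')

theorem le_span_pow_of_apply_eq_zero [CharZero K] {V : Submodule K (MvPolynomial (Fin 2) K)}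
    (hVW : V ≤ homogeneousSubmodule (Fin 2) K d) (hφV : φ ∈ V.dualAnnihilator)
    (hφd : φ (X 1 ^ d) ≠ 0) {r : Fin d → K} (hr : Function.Injective r)
    (hr0 : ∀ i, φ ((X 0 + C (r i) * X 1) ^ d) = 0) :
    V ≤ span K (Set.range fun i => (X 0 + C (r i) * X 1) ^ d) := by
  intro v hv
  refine (Subspace.forall_mem_dualAnnihilator_apply_eq_zero_iff _ v).1 fun ψ hψ => ?_
  have hψr (i : Fin d) : ψ ((X 0 + C (r i) * X 1) ^ d) = 0 :=
    (mem_dualAnnihilator ψ).1 hψ _ (subset_span ⟨i, rfl⟩)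
  set χ := ψ - (ψ (X 1 ^ d) / φ (X 1 ^ d)) • φ
  have hχd : χ (X 1 ^ d) = 0 := by simp [χ, hφd]
  have hχ : restrictToCurve K d χ = 0 := by
    by_contra hχ
    refine hχ (Polynomial.eq_zero_of_natDegree_lt_card_of_eval_eq_zero _ hr (fun i => ?_) ?_)
    · simp [eval_restrictToCurve, χ, hψr, hr0]
    · rw [Fintype.card_fin]
      refine (natDegree_restrictToCurve_le χ).lt_of_ne fun h => hχ ?_
      rw [← Polynomial.leadingCoeff_eq_zero, Polynomial.leadingCoeff, h,
        coeff_restrictToCurve_self, hχd]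
  have hχv := homogeneousSubmodule_le_ker_of_restrictToCurve_eq_zero χ hχ (hVW hv)
  simpa [χ, (mem_dualAnnihilator φ).1 hφV v hv] using hχv

theorem isLinForm_X (i : Fin 2) : IsLinForm (X i : MvPolynomial (Fin 2) K) :=
  ⟨X_ne_zero i, isHomogeneous_X K i⟩

theorem isLinForm_X_add_C_mul_X (r : K) :
    IsLinForm (X 0 + C r * X 1 : MvPolynomial (Fin 2) K) := by
  refine ⟨fun h => ?_, ?_⟩
  · simpa [coeff_X, coeff_C_mul, Finsupp.single_eq_single_iff] using
      congrArg (coeff (Finsupp.single 0 1)) h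
  · simpa using (isHomogeneous_X K 0).add ((isHomogeneous_C _ r).mul (isHomogeneous_X K 1))

end

theorem subspace_le_span_of_powers_projected_general
    {K : Type*} [Field K] [IsAlgClosed K] [CharZero K] (d : ℕ)
    (O : MvPolynomial (Fin 2) K) (hO0 : O ≠ 0)
    (V : Submodule K (MvPolynomial (Fin 2) K))
    (hVW : V ≤ homogeneousSubmodule (Fin 2) K d) (hOV : O ∈ V)
    (hVX : ∀ l : MvPolynomial (Fin 2) K, IsLinForm l → l ^ d ∉ V) :
    ∃ l : Fin (d - 1) → MvPolynomial (Fin 2) K, (∀ i, IsLinForm (l i)) ∧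
      V ≤ span K (insert O (Set.range fun i => l i ^ d)) := by
  have hfree {l} (hl : IsLinForm l) := exists_mem_dualAnnihilator_apply_ne_zero (hVX l hl)
  obtain ⟨p, hpS, hpd, hp⟩ := Polynomial.exists_mem_coeff_ne_zero_nodup_roots
    (S := V.dualAnnihilator.map (restrictToCurve K d)) (n := d)
    (by
      obtain ⟨φ, hφV, hφ⟩ := hfree (isLinForm_X 1)
      exact ⟨_, mem_map_of_mem hφV, by rwa [coeff_restrictToCurve_self]⟩)
    (fun z => by
      obtain ⟨φ, hφV, hφ⟩ := hfree (isLinForm_X_add_C_mul_X z)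
      exact ⟨_, mem_map_of_mem hφV, by rwa [eval_restrictToCurve]⟩)
  obtain ⟨φ, hφV, rfl⟩ := mem_map.1 hpS
  obtain ⟨r, hr, hr0⟩ := Polynomial.exists_injective_isRoot
    ((natDegree_restrictToCurve_le φ).antisymm (Polynomial.le_natDegree_of_ne_zero hpd)) hp
  have hVU := le_span_pow_of_apply_eq_zero φ hVW hφV (by rwa [← coeff_restrictToCurve_self])
    hr fun i => by rw [← eval_restrictToCurve]; exact hr0 i
  cases d with
  | zero => exact absurd (by simpa using hVU hOV) hO0
  | succ n =>
    obtain ⟨k, hk⟩ := exists_span_range_le_span_insert_succAbove (hVU hOV) hO0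
    exact ⟨fun i => X 0 + C (r (k.succAbove i)) * X 1, fun i => isLinForm_X_add_C_mul_X _,
      hVU.trans hk⟩

/-- Proposition 3.1 of the paper applied to the projected rational normal
curve, `m = 1`, `n = d − 1`: let `O ∈ W_d` be nonzero and not a multiple of any `ℓ^d`, and
let `V ⊆ W_d` be a subspace with `O ∈ V` containing no `d`-th power of a linear form (so the
image of `ℙ(V/K·O)` is disjoint from the projected curve `X`).  Then there are linear forms
`ℓ₁, …, ℓ_{d−1}` with `V ⊆ span{ℓ₁^d, …, ℓ_{d−1}^d} + K·O`. -/
theorem subspace_le_span_of_powers_projected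
    {K : Type*} [Field K] [IsAlgClosed K] [CharZero K] (d : ℕ) (hd : 2 ≤ d)
    (O : MvPolynomial (Fin 2) K) (hOd : O.IsHomogeneous d) (hO0 : O ≠ 0)
    (hOC : ∀ (c : K) (l : MvPolynomial (Fin 2) K), IsLinForm l → O ≠ c • l ^ d)
    (V : Submodule K (MvPolynomial (Fin 2) K))
    (hVW : V ≤ homogeneousSubmodule (Fin 2) K d) (hOV : O ∈ V)
    (hVX : ∀ l : MvPolynomial (Fin 2) K, IsLinForm l → l ^ d ∉ V) :
    ∃ l : Fin (d - 1) → MvPolynomial (Fin 2) K, (∀ i, IsLinForm (l i)) ∧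
      V ≤ span K (insert O (Set.range fun i => l i ^ d)) :=
  subspace_le_span_of_powers_projected_general d O hO0 V hVW hOV hVX
end
end

section
/- Let K be an algebraically closed field of characteristic 0, let d ≥ 2, and let W_d be the K-vector space of binary forms of degree d in x, y. Fix O ∈ W_d, O ≠ 0, not a scalar multiple of ℓ^d for any linear form ℓ. Let V ⊆ W_d be any K-linear subspace with O ∈ V. Let U = span_K{ ℓ^d : ℓ a linear form with ℓ^d ∈ V } and let s = dim_K((U + K·O)/K·O). Then there exist an integer r ≤ (d − 1) + s and linear forms ℓ₁, …, ℓ_r such that V ⊆ span_K{ℓ₁^d, …, ℓ_r^d} + K·O. -/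
/-!
A linear functional `φ` on binary forms restricts to the rational normal curve `t ↦ (x + t y)^d`
as a polynomial of degree at most `d` in `t` whose `t^d`-coefficient is `φ (y^d)`; hence any
`d + 1` points of the curve span `W_d`. If `V` contains some `ℓ^d`, then `s ≥ 1` (because
`ℓ^d ∉ K·O`) and `d + 1` points suffice. Otherwise the functionals vanishing on `V` form a linear
system on `ℙ¹` without base points, and a general member of a pencil in it has `d` simple roots,
since the Wronskian of the pencil is nonzero. Adding one more point of the curve off these roots
and applying that functional shows that the `d` points at the roots already span `V`. In both cases
`O` is a combination of the chosen powers with a nonzero coefficient on one of them, and `O` can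
replace that power.
-/

open MvPolynomial Submodule

noncomputable section

section LinearAlgebra

variable {K M : Type*} [Field K] [AddCommGroup M] [Module K M]

theorem Submodule.mem_span_of_mem_span_insert_of_apply_eq_zero {s : Set M} {x y : M}
    (φ : Module.Dual K M) (hy : y ∈ span K (insert x s)) (hφy : φ y = 0) (hφx : φ x ≠ 0)
    (hφs : ∀ z ∈ s, φ z = 0) : y ∈ span K s := by
  obtain ⟨a, z, hz, rfl⟩ := mem_span_insert.mp hy
  have hφz : φ z = 0 := span_le (p := LinearMap.ker φ) |>.mpr hφs hz
  rw [map_add, map_smul, hφz, add_zero, smul_eq_mul, mul_eq_zero] at hφy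
  rwa [hφy.resolve_right hφx, zero_smul, zero_add]

theorem Submodule.exists_mem_span_image_le_span_insert_erase {ι : Type*} [DecidableEq ι]
    (v : ι → M) {S : Finset ι} {x : M} (hx : x ∈ span K (v '' S)) (hx0 : x ≠ 0) :
    ∃ i ∈ S, span K (v '' S) ≤ span K (insert x (v '' (S.erase i))) := by
  obtain ⟨c, hc⟩ := (mem_span_image_finset_iff_exists_fun' K).mp hx
  obtain ⟨i, hi, hci⟩ : ∃ i ∈ S, c i ≠ 0 := by
    by_contra! h
    exact hx0 (hc ▸ Finset.sum_eq_zero fun i hi => by rw [h i hi, zero_smul])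
  refine ⟨i, hi, span_le.mpr ?_⟩
  rintro _ ⟨j, hj, rfl⟩
  by_cases hji : j = i
  · subst hji
    have hvj : v j = (c j)⁻¹ • (x - ∑ k ∈ S.erase j, c k • v k) := by
      rw [← hc, ← Finset.add_sum_erase S _ hj, add_sub_cancel_right, smul_smul,
        inv_mul_cancel₀ hci, one_smul]
    rw [hvj]
    refine smul_mem _ _ (sub_mem (subset_span (Set.mem_insert _ _)) (sum_smul_mem _ _ ?_))
    exact fun k hk => subset_span (Set.mem_insert_of_mem _ ⟨k, hk, rfl⟩)
  · exact subset_span (Set.mem_insert_of_mem _ ⟨j, Finset.mem_erase.mpr ⟨hji, hj⟩, rfl⟩)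

theorem Submodule.notMem_span_singleton_of_forall_ne_smul {x y : M} (hy : y ≠ 0)
    (h : ∀ c : K, x ≠ c • y) : y ∉ span K {x} := by
  rw [mem_span_singleton]
  rintro ⟨a, rfl⟩
  have ha : a ≠ 0 := by rintro rfl; exact hy (zero_smul K x)
  exact h a⁻¹ (by rw [smul_smul, inv_mul_cancel₀ ha, one_smul])

theorem Submodule.finrank_map_mkQ_pos {N U : Submodule K M} [FiniteDimensional K U] {x : M}
    (hxU : x ∈ U) (hxN : x ∉ N) : 0 < Module.finrank K (U.map N.mkQ) := by
  refine Module.finrank_pos_iff_exists_ne_zero.mpr ⟨⟨N.mkQ x, mem_map_of_mem hxU⟩, ?_⟩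
  simpa [Subtype.ext_iff, Quotient.mk_eq_zero] using hxN

end LinearAlgebra

namespace Polynomial

variable {K : Type*} [Field K]

theorem exists_mem_forall_eval_ne_zero [Infinite K] {L : Submodule K K[X]} (S : Finset K)
    (h : ∀ t ∈ S, ∃ q ∈ L, q.eval t ≠ 0) : ∃ q ∈ L, ∀ t ∈ S, q.eval t ≠ 0 := by
  by_contra! hcov
  obtain ⟨⟨t, ht⟩, htop⟩ := Subspace.exists_eq_top_of_iUnion_eq_univ
    (p := fun t : S => LinearMap.ker ((leval (t : K)).comp L.subtype)) <| by
      refine Set.eq_univ_of_forall fun q => Set.mem_iUnion.mpr ?_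
      obtain ⟨t, ht, hqt⟩ := hcov q q.2
      exact ⟨⟨t, ht⟩, hqt⟩
  obtain ⟨q, hqL, hqt⟩ := h t ht
  exact hqt (LinearMap.mem_ker.mp (htop ▸ Submodule.mem_top : (⟨q, hqL⟩ : L) ∈ _))

variable [IsAlgClosed K]

/-- A double root `t` of `q₀ + μ • q₁` is a root of the Wronskian, and determines
`μ = -q₀(t) / q₁(t)`. -/
theorem finite_setOf_not_separable_add_smul {q₀ q₁ : K[X]} (hcop : IsCoprime q₀ q₁)
    (hW : wronskian q₀ q₁ ≠ 0) : {μ : K | ¬ (q₀ + μ • q₁).Separable}.Finite := by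
  classical
  have hcop' := (isCoprime_iff_aeval_ne_zero_of_isAlgClosed K K q₀ q₁).mp hcop
  simp only [coe_aeval_eq_eval] at hcop'
  refine ((wronskian q₀ q₁).roots.toFinset.image
    fun t => -q₀.eval t / q₁.eval t).finite_toSet.subset fun μ hμ => ?_
  obtain ⟨t, hq, hq'⟩ : ∃ t, q₀.eval t + μ * q₁.eval t = 0 ∧
      (derivative q₀).eval t + μ * (derivative q₁).eval t = 0 := by
    simpa [Separable, isCoprime_iff_aeval_ne_zero_of_isAlgClosed K K] using hμ
  have h₁ : q₁.eval t ≠ 0 := fun h₁ => by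
    simpa [h₁, show q₀.eval t = 0 by simpa [h₁] using hq] using hcop' t
  simp only [Finset.coe_image, Set.mem_image, Finset.mem_coe, Multiset.mem_toFinset,
    mem_roots hW, IsRoot.def]
  refine ⟨t, ?_, by field_simp; linear_combination -hq⟩
  simp only [wronskian, eval_sub, eval_mul]
  linear_combination (derivative q₁).eval t * hq - q₁.eval t * hq'

theorem exists_mem_natDegree_eq_separable [CharZero K] {L : Submodule K K[X]} {d : ℕ}
    (hd : 0 < d) (hdeg : ∀ q ∈ L, q.natDegree ≤ d) (htop : ∃ q ∈ L, q.coeff d ≠ 0)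
    (hbase : ∀ t, ∃ q ∈ L, q.eval t ≠ 0) :
    ∃ q ∈ L, q.natDegree = d ∧ q.Separable := by
  classical
  obtain ⟨q₀, hq₀L, hq₀d⟩ := htop
  have hq₀deg : q₀.natDegree = d :=
    natDegree_eq_of_le_of_coeff_ne_zero (hdeg q₀ hq₀L) hq₀d
  have hq₀0 : q₀ ≠ 0 := by rintro rfl; exact hq₀d (coeff_zero d)
  obtain ⟨q₁, hq₁L, hq₁⟩ :=
    exists_mem_forall_eval_ne_zero q₀.roots.toFinset fun t _ => hbase t
  have hcop : IsCoprime q₀ q₁ := by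
    refine (isCoprime_iff_aeval_ne_zero_of_isAlgClosed K K q₀ q₁).mpr fun t => ?_
    simp only [coe_aeval_eq_eval]
    by_cases ht : q₀.eval t = 0
    · exact Or.inr (hq₁ t (by simpa [hq₀0] using ht))
    · exact Or.inl ht
  have hW : wronskian q₀ q₁ ≠ 0 := by
    rw [Ne, hcop.wronskian_eq_zero_iff, derivative_eq_zero, hq₀deg]
    omega
  have hlead : {μ : K | (q₀ + μ • q₁).coeff d = 0}.Finite := by
    refine (Set.finite_singleton (-q₀.coeff d / q₁.coeff d)).subset fun μ hμ => ?_
    have hμ : q₀.coeff d + μ * q₁.coeff d = 0 := by simpa using hμ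
    have h₁ : q₁.coeff d ≠ 0 := fun h₁ => hq₀d (by simpa [h₁] using hμ)
    rw [Set.mem_singleton_iff]
    field_simp
    linear_combination hμ
  obtain ⟨μ, hμ⟩ :=
    (hlead.union (finite_setOf_not_separable_add_smul hcop hW)).infinite_compl.nonempty
  simp only [Set.mem_compl_iff, Set.mem_union, Set.mem_ofPred_eq, not_or, not_not] at hμ
  have hqL : q₀ + μ • q₁ ∈ L := L.add_mem hq₀L (L.smul_mem μ hq₁L)
  exact ⟨_, hqL, natDegree_eq_of_le_of_coeff_ne_zero (hdeg _ hqL) hμ.1, hμ.2⟩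

end Polynomial

namespace BinaryForm

variable {K : Type*} [Field K]

def lin (t : K) : MvPolynomial (Fin 2) K := X 0 + C t * X 1

theorem isLinForm_lin (t : K) : IsLinForm (lin t) := by
  refine ⟨fun h => by simpa [lin] using congrArg (eval ![1, 0]) h, ?_⟩
  simpa [lin] using (isHomogeneous_X K 0).add ((isHomogeneous_C _ t).mul (isHomogeneous_X K 1))

theorem lin_pow_eq_sum (t : K) (d : ℕ) :
    lin t ^ d =
      ∑ i ∈ Finset.range (d + 1), ((d.choose i : K) * t ^ i) • (X 0 ^ (d - i) * X 1 ^ i) := by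
  rw [lin, add_comm, add_pow]
  refine Finset.sum_congr rfl fun i _ => ?_
  rw [smul_eq_C_mul, map_mul, map_pow, map_natCast]
  ring

theorem homogeneousSubmodule_le_span_monomials (d : ℕ) :
    homogeneousSubmodule (Fin 2) K d ≤
      span K ((fun i => X 0 ^ (d - i) * X 1 ^ i) '' Finset.range (d + 1)) := by
  intro f hf
  rw [mem_homogeneousSubmodule] at hf
  rw [f.as_sum]
  refine sum_mem fun m hm => ?_
  have hdeg : m 0 + m 1 = d := by
    rw [hf.degree_eq_sum_deg_support hm, ← Finsupp.degree_apply, Finsupp.degree_eq_sum,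
      Fin.sum_univ_two]
  rw [monomial_eq, ← smul_eq_C_mul, Finsupp.prod_fintype _ _ (by simp), Fin.prod_univ_two]
  refine smul_mem _ _ (subset_span ⟨m 1, ?_, by simp [← hdeg]⟩)
  simp only [Finset.coe_range, Set.mem_Iio]
  omega

instance (d : ℕ) : FiniteDimensional K (homogeneousSubmodule (Fin 2) K d) :=
  have := FiniteDimensional.span_of_finite K <| (Finset.range (d + 1)).finite_toSet.image
    fun i => (X 0 ^ (d - i) * X 1 ^ i : MvPolynomial (Fin 2) K)
  Submodule.finiteDimensional_of_le (homogeneousSubmodule_le_span_monomials d)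

/-- The polynomial `t ↦ φ ((x + t y)^d)` (`eval_dualPoly`); its `t^d`-coefficient is `φ (y^d)`,
the value at the point of the curve outside this chart. -/
def dualPoly (d : ℕ) : Module.Dual K (MvPolynomial (Fin 2) K) →ₗ[K] Polynomial K :=
  ∑ i ∈ Finset.range (d + 1), (Module.Dual.eval K _ (X 0 ^ (d - i) * X 1 ^ i)).smulRight
    (Polynomial.monomial i (d.choose i : K))

theorem dualPoly_apply (d : ℕ) (φ : Module.Dual K (MvPolynomial (Fin 2) K)) :
    dualPoly d φ = ∑ i ∈ Finset.range (d + 1),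
      Polynomial.monomial i (d.choose i * φ (X 0 ^ (d - i) * X 1 ^ i)) := by
  simp [dualPoly, Polynomial.smul_monomial, mul_comm]

theorem eval_dualPoly (d : ℕ) (φ : Module.Dual K (MvPolynomial (Fin 2) K)) (t : K) :
    (dualPoly d φ).eval t = φ (lin t ^ d) := by
  rw [dualPoly_apply, lin_pow_eq_sum, map_sum, Polynomial.eval_finsetSum]
  refine Finset.sum_congr rfl fun i _ => ?_
  simp only [Polynomial.eval_monomial, map_smul, smul_eq_mul]
  ring

theorem coeff_dualPoly {d i : ℕ} (hi : i ≤ d) (φ : Module.Dual K (MvPolynomial (Fin 2) K)) :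
    (dualPoly d φ).coeff i = d.choose i * φ (X 0 ^ (d - i) * X 1 ^ i) := by
  rw [dualPoly_apply, Polynomial.finsetSum_coeff,
    Finset.sum_eq_single_of_mem i (Finset.mem_range_succ_iff.mpr hi)]
  · simp
  · intro j _ hji
    simp [Polynomial.coeff_monomial, hji]

theorem natDegree_dualPoly_le (d : ℕ) (φ : Module.Dual K (MvPolynomial (Fin 2) K)) :
    (dualPoly d φ).natDegree ≤ d := by
  rw [dualPoly_apply]
  refine Polynomial.natDegree_sum_le_of_forall_le _ _ fun i hi => ?_
  exact (Polynomial.natDegree_monomial_le _).trans (Finset.mem_range_succ_iff.mp hi)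

theorem homogeneousSubmodule_le_ker_of_dualPoly_eq_zero [CharZero K] {d : ℕ}
    {φ : Module.Dual K (MvPolynomial (Fin 2) K)} (hφ : dualPoly d φ = 0) :
    homogeneousSubmodule (Fin 2) K d ≤ LinearMap.ker φ := by
  refine (homogeneousSubmodule_le_span_monomials d).trans (span_le.mpr ?_)
  rintro _ ⟨i, hi, rfl⟩
  have hi : i ≤ d := Finset.mem_range_succ_iff.mp hi
  have := coeff_dualPoly hi φ
  rw [hφ, Polynomial.coeff_zero, eq_comm, mul_eq_zero] at this
  exact this.resolve_left (Nat.cast_ne_zero.mpr (Nat.choose_pos hi).ne')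

theorem homogeneousSubmodule_le_span_lin_pow [CharZero K] {d : ℕ} {S : Finset K}
    (hS : d < S.card) :
    homogeneousSubmodule (Fin 2) K d ≤ span K ((fun t => lin t ^ d) '' S) := by
  intro f hf
  rw [← Subspace.forall_mem_dualAnnihilator_apply_eq_zero_iff]
  intro φ hφ
  refine homogeneousSubmodule_le_ker_of_dualPoly_eq_zero ?_ hf
  refine Polynomial.eq_zero_of_natDegree_lt_card_of_eval_eq_zero' _ S (fun t ht => ?_)
    ((natDegree_dualPoly_le d φ).trans_lt hS)
  rw [eval_dualPoly]
  exact (mem_dualAnnihilator φ).mp hφ _ (subset_span ⟨t, ht, rfl⟩)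

theorem exists_card_eq_and_le_span_lin_pow [IsAlgClosed K] [CharZero K] {d : ℕ} (hd : 0 < d)
    {V : Submodule K (MvPolynomial (Fin 2) K)} (hVW : V ≤ homogeneousSubmodule (Fin 2) K d)
    (hV : ∀ l, IsLinForm l → l ^ d ∉ V) :
    ∃ S : Finset K, S.card = d ∧ V ≤ span K ((fun t => lin t ^ d) '' S) := by
  classical
  have hsep (l) (hl : IsLinForm l) : ∃ φ ∈ V.dualAnnihilator, φ (l ^ d) ≠ 0 := by
    simpa using mt (Subspace.forall_mem_dualAnnihilator_apply_eq_zero_iff V _).mp (hV l hl)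
  obtain ⟨_, ⟨ψ, hψ, rfl⟩, hψd, hψsep⟩ :=
    Polynomial.exists_mem_natDegree_eq_separable (L := V.dualAnnihilator.map (dualPoly d)) hd
      (by rintro _ ⟨φ, -, rfl⟩; exact natDegree_dualPoly_le d φ)
      (by
        obtain ⟨φ, hφ, hφy⟩ := hsep (X 1) ⟨X_ne_zero 1, isHomogeneous_X K 1⟩
        exact ⟨_, mem_map_of_mem hφ, by simpa [coeff_dualPoly] using hφy⟩)
      (fun t => by
        obtain ⟨φ, hφ, hφt⟩ := hsep _ (isLinForm_lin t)
        exact ⟨_, mem_map_of_mem hφ, by rwa [eval_dualPoly]⟩)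
  set q := dualPoly d ψ
  have hq0 : q ≠ 0 := by
    rintro h
    rw [h, Polynomial.natDegree_zero] at hψd
    omega
  have hcard : q.roots.toFinset.card = d := by
    rw [Multiset.toFinset_card_of_nodup (Polynomial.nodup_roots hψsep),
      Polynomial.splits_iff_card_roots.mp (IsAlgClosed.splits q), hψd]
  refine ⟨q.roots.toFinset, hcard, fun f hf => ?_⟩
  obtain ⟨t', ht'⟩ := Infinite.exists_notMem_finset q.roots.toFinset
  have hfspan : f ∈ span K (insert (lin t' ^ d) ((fun t => lin t ^ d) '' q.roots.toFinset)) := by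
    have hcard' : d < (insert t' q.roots.toFinset).card := by
      rw [Finset.card_insert_of_notMem ht', hcard]
      omega
    simpa [Set.image_insert_eq] using homogeneousSubmodule_le_span_lin_pow hcard' (hVW hf)
  refine mem_span_of_mem_span_insert_of_apply_eq_zero ψ hfspan
    ((mem_dualAnnihilator ψ).mp hψ f hf) ?_ ?_
  · rw [← eval_dualPoly]
    exact fun h => ht' (by simpa [hq0] using h)
  · rintro _ ⟨t, ht, rfl⟩
    rw [← eval_dualPoly]
    simpa [hq0] using ht

end BinaryForm

open BinaryForm in
theorem subspace_rank_bound_projected_general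
    {K : Type*} [Field K] [IsAlgClosed K] [CharZero K] (d : ℕ) (hd : 2 ≤ d)
    (O : MvPolynomial (Fin 2) K) (hO0 : O ≠ 0)
    (hOC : ∀ (c : K) (l : MvPolynomial (Fin 2) K), IsLinForm l → O ≠ c • l ^ d)
    (V : Submodule K (MvPolynomial (Fin 2) K))
    (hVW : V ≤ homogeneousSubmodule (Fin 2) K d) (hOV : O ∈ V)
    (U : Submodule K (MvPolynomial (Fin 2) K))
    (hU : U = span K {g : MvPolynomial (Fin 2) K |
      ∃ l : MvPolynomial (Fin 2) K, IsLinForm l ∧ g = l ^ d ∧ g ∈ V})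
    (s : ℕ)
    (hs : s = Module.finrank K
      (Submodule.map (span K ({O} : Set (MvPolynomial (Fin 2) K))).mkQ U)) :
    ∃ r ≤ (d - 1) + s, ∃ l : Fin r → MvPolynomial (Fin 2) K, (∀ i, IsLinForm (l i)) ∧
      V ≤ span K (insert O (Set.range fun i => l i ^ d)) := by
  classical
  obtain ⟨S, hS, hVS⟩ : ∃ S : Finset K, S.card ≤ d + s ∧
      V ≤ span K ((fun t => lin t ^ d) '' S) := by
    by_cases hpow : ∃ l, IsLinForm l ∧ l ^ d ∈ V
    · obtain ⟨l, hl, hlV⟩ := hpow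
      have hUW : U ≤ homogeneousSubmodule (Fin 2) K d := by
        rw [hU, span_le]
        rintro _ ⟨l, hl, rfl, -⟩
        exact (mem_homogeneousSubmodule _ _).mpr (by simpa using hl.2.pow d)
      have : FiniteDimensional K U := Submodule.finiteDimensional_of_le hUW
      have hs_pos : 0 < s := hs ▸ finrank_map_mkQ_pos (hU ▸ subset_span ⟨l, hl, rfl, hlV⟩)
        (notMem_span_singleton_of_forall_ne_smul (pow_ne_zero d hl.1) fun c => hOC c l hl)
      obtain ⟨S, hS⟩ := Infinite.exists_subset_card_eq K (d + 1)
      have hW := homogeneousSubmodule_le_span_lin_pow (d := d) (hS ▸ lt_add_one d)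
      exact ⟨S, by omega, hVW.trans hW⟩
    · push Not at hpow
      obtain ⟨S, hS, hVS⟩ := exists_card_eq_and_le_span_lin_pow (by omega) hVW hpow
      exact ⟨S, by omega, hVS⟩
  obtain ⟨i, hi, hSO⟩ := exists_mem_span_image_le_span_insert_erase _ (hVS hOV) hO0
  set T := S.erase i
  refine ⟨T.card, by rw [Finset.card_erase_of_mem hi]; omega,
    fun j => lin (T.equivFin.symm j), fun j => isLinForm_lin _,
    hVS.trans (hSO.trans (span_mono (Set.insert_subset_insert ?_)))⟩
  rintro _ ⟨t, ht, rfl⟩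
  exact ⟨T.equivFin ⟨t, ht⟩, by simp⟩

/-- Proposition 3.4 of the paper applied to the projected rational normal
curve, `m = 1`, `n = d − 1`: let `O ∈ W_d` be nonzero and not a multiple of any `ℓ^d`, let
`V ⊆ W_d` be any subspace with `O ∈ V`, let `U` be the span of the `d`-th powers of linear
forms lying in `V`, and let `s = dim (U + K·O)/(K·O)`.  Then there exist `r ≤ (d − 1) + s` and
linear forms `ℓ₁, …, ℓ_r` with `V ⊆ span{ℓ₁^d, …, ℓ_r^d} + K·O`. -/
theorem subspace_rank_bound_projected
    {K : Type*} [Field K] [IsAlgClosed K] [CharZero K] (d : ℕ) (hd : 2 ≤ d)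
    (O : MvPolynomial (Fin 2) K) (hOd : O.IsHomogeneous d) (hO0 : O ≠ 0)
    (hOC : ∀ (c : K) (l : MvPolynomial (Fin 2) K), IsLinForm l → O ≠ c • l ^ d)
    (V : Submodule K (MvPolynomial (Fin 2) K))
    (hVW : V ≤ homogeneousSubmodule (Fin 2) K d) (hOV : O ∈ V)
    (U : Submodule K (MvPolynomial (Fin 2) K))
    (hU : U = span K {g : MvPolynomial (Fin 2) K |
      ∃ l : MvPolynomial (Fin 2) K, IsLinForm l ∧ g = l ^ d ∧ g ∈ V})
    (s : ℕ)
    (hs : s = Module.finrank K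
      (Submodule.map (span K ({O} : Set (MvPolynomial (Fin 2) K))).mkQ U)) :
    ∃ r ≤ (d - 1) + s, ∃ l : Fin r → MvPolynomial (Fin 2) K, (∀ i, IsLinForm (l i)) ∧
      V ≤ span K (insert O (Set.range fun i => l i ^ d)) :=
  subspace_rank_bound_projected_general d hd O hO0 hOC V hVW hOV U hU s hs
end
end
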